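/- The antipode of the Hopf algebra (k⟨A⟩, ∗_r, Δ) is S = Σ^{1−2r} ∘ T ∘ R, where T(w) = (−1)^{ℓ(w)}w and R reverses words. In particular for r = 1/2 the antipode is T∘R. -/

import Mathlib

/-!
Quasi-shuffle algebras (Hoffman–Ihara).  We model the span `kA` of the alphabet
(with its commutative associative product `⋄`, written `*` in `L`) as a
non-unital commutative `k`-algebra `L`, and the word algebra `k⟨A⟩` as the
tensor algebra `TensorAlgebra k L`, in which a word `a₁⋯aₙ` is the product
`ι a₁ * ⋯ * ι aₙ`.
-/

open TensorAlgebra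

variable (k : Type*) [Field k]
variable {L : Type*} [NonUnitalCommRing L] [Module k L]
  [SMulCommClass k L L] [IsScalarTower k L L]

/-- The word `a₁⋯aₙ` as an element of the tensor algebra. -/
def word (l : List L) : TensorAlgebra k L := (l.map fun a => TensorAlgebra.ι k a).prod

/-- The `⋄`-product of the letters of a nonempty block (junk value `0` on `[]`). -/
def blockProd : List L → L
  | [] => 0
  | a :: t => t.foldl (· * ·) a

/-- The Hoffman–Ihara operator `Ψ_f` on words, for `f = c₁t + c₂t² + ⋯`:
`Ψ_f(w) = Σ_{(i₁,…,i_m) composition of ℓ(w)} c_{i₁}⋯c_{i_m} I[w]`,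
written via the recursion on the first block. -/
def psi (c : ℕ → k) : List L → TensorAlgebra k L
  | [] => 1
  | a :: w => ∑ j ∈ Finset.range (w.length + 1),
      c (j + 1) • (TensorAlgebra.ι k (blockProd (a :: w.take j)) * psi c (w.drop j))
  termination_by l => l.length
  decreasing_by simp [List.length_drop] <;> omega

/-!
Write `s = 1 - 2r`, `q = r² - r` and `E_a z = a z + s D_a z`, so that `Σ^s (a u) = E_a (Σ^s u)`.
The recursion for `∗_r` gives `E_a z ∗ b y = E_a (z ∗ b y) + b (E_a z ∗ y) + q D_{a⋄b} (z ∗ y)`.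
In the alternating sum `∑ᵢ (-1)ⁱ Σ^s(R(w_{<i})) ∗ w_{≥i}` the first two kinds of terms cancel in
adjacent pairs, and what is left are sums of the same shape in which a block of `l` consecutive
letters has been merged into one by `D`. These sums `A_l` satisfy
`A_l + s A_{l+1} + q A_{l+2} = 0` and vanish for `l = ℓ(w)` and `l = ℓ(w) - 1`, hence vanish for
all `l`; `A_0 = 0` is the left antipode identity.
The recursion also holds on last letters (with `D` conjugated by `R`), so `R` is an automorphism
of the commutative product `∗_r`; it commutes with `Σ^s T R`, which turns the left identity for
`R w` into the right identity for `w`.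
-/

section

omit [SMulCommClass k L L] [IsScalarTower k L L]
variable {k}

@[simp] lemma word_nil : word k ([] : List L) = 1 := rfl

@[simp] lemma word_cons (a : L) (u : List L) : word k (a :: u) = ι k a * word k u := by
  simp [word]

lemma word_append (u v : List L) : word k (u ++ v) = word k u * word k v := by
  simp [word]

lemma prod_mem_range_word : ∀ l : List (TensorAlgebra k L), (∀ y ∈ l, y ∈ Set.range (ι k)) →
    l.prod ∈ Set.range (word k (L := L))
  | [], _ => ⟨[], rfl⟩
  | y :: l, hl => by
    obtain ⟨a, rfl⟩ := hl y List.mem_cons_self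
    obtain ⟨u, hu⟩ := prod_mem_range_word l fun z hz => hl z (List.mem_cons_of_mem _ hz)
    exact ⟨a :: u, by rw [word_cons, hu, List.prod_cons]⟩

lemma span_range_word : Submodule.span k (Set.range (word k (L := L))) = ⊤ := by
  refine eq_top_iff.2 fun x _ => ?_
  have hx : x ∈ Subalgebra.toSubmodule (Algebra.adjoin k (Set.range (ι k (M := L)))) := by
    simp [adjoin_range_ι]
  rw [Algebra.adjoin_eq_span] at hx
  refine Submodule.span_mono (fun y hy => ?_) hx
  obtain ⟨l, hl, rfl⟩ := Submonoid.exists_list_of_mem_closure hy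
  exact prod_mem_range_word l hl

@[elab_as_elim]
lemma word_induction {P : TensorAlgebra k L → Prop} (word : ∀ u, P (word k u))
    (add : ∀ x y, P x → P y → P (x + y)) (smul : ∀ (c : k) x, P x → P (c • x))
    (x : TensorAlgebra k L) : P x := by
  have hx : x ∈ Submodule.span k (Set.range (_root_.word k (L := L))) := by
    simp [span_range_word]
  induction hx using Submodule.span_induction with
  | mem y hy => obtain ⟨u, rfl⟩ := hy; exact word u
  | zero => simpa using smul 0 _ (word [])
  | add y z _ _ hy hz => exact add y z hy hz
  | smul c y _ hy => exact smul c y hy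

@[simp] lemma algebraMapInv_ι (a : L) : algebraMapInv (ι k a) = 0 := by
  simp [algebraMapInv]

@[simp] lemma algebraMapInv_word_cons (a : L) (u : List L) :
    algebraMapInv (word k (a :: u)) = 0 := by
  simp

lemma List.reverse_take_succ {α : Type*} (w : List α) {i : ℕ} (hi : i < w.length) :
    (w.take (i + 1)).reverse = w[i] :: (w.take i).reverse := by
  rw [List.take_add_one, List.getElem?_eq_getElem hi]
  simp

lemma blockProd_cons {u : List L} (hu : u ≠ []) (a : L) :
    blockProd (a :: u) = a * blockProd u := by
  obtain ⟨b, t, rfl⟩ := List.exists_cons_of_ne_nil hu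
  simp only [blockProd, List.foldl_cons, List.foldl_assoc]

lemma blockProd_append_singleton {u : List L} (hu : u ≠ []) (a : L) :
    blockProd (u ++ [a]) = blockProd u * a := by
  obtain ⟨b, t, rfl⟩ := List.exists_cons_of_ne_nil hu
  simp only [blockProd, List.cons_append, List.foldl_append, List.foldl_cons, List.foldl_nil]

structure IsFirstLetterMerge (D : L → TensorAlgebra k L →ₗ[k] TensorAlgebra k L) : Prop where
  map_one : ∀ a, D a 1 = 0
  map_ι_mul_word : ∀ a c u, D a (ι k c * word k u) = ι k (a * c) * word k u

namespace IsFirstLetterMerge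

variable {D : L → TensorAlgebra k L →ₗ[k] TensorAlgebra k L} (hD : IsFirstLetterMerge D)
include hD

lemma map_word_cons (a c : L) (u : List L) : D a (word k (c :: u)) = word k ((a * c) :: u) := by
  simp [hD.map_ι_mul_word]

lemma map_ι_mul (a c : L) (z : TensorAlgebra k L) : D a (ι k c * z) = ι k (a * c) * z := by
  induction z using word_induction with
  | word u => exact hD.map_ι_mul_word a c u
  | add x y hx hy => simp only [mul_add, map_add, hx, hy]
  | smul e x hx => simp only [mul_smul_comm, map_smul, hx]

lemma map_ι (a c : L) : D a (ι k c) = ι k (a * c) := by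
  simpa using hD.map_ι_mul a c 1

lemma map_map (a c : L) (z : TensorAlgebra k L) : D a (D c z) = D (a * c) z := by
  induction z using word_induction with
  | word u =>
    cases u with
    | nil => simp [hD.map_one]
    | cons e t => simp only [hD.map_word_cons, mul_assoc]
  | add x y hx hy => simp only [map_add, hx, hy]
  | smul e x hx => simp only [map_smul, hx]

lemma algebraMapInv_map (a : L) (z : TensorAlgebra k L) : algebraMapInv (D a z) = 0 := by
  induction z using word_induction with
  | word u =>
    cases u with
    | nil => simp [hD.map_one]
    | cons e t => simp [hD.map_ι_mul]
  | add x y hx hy => simp only [map_add, hx, hy, add_zero]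
  | smul e x hx => simp only [map_smul, hx, smul_zero]

lemma map_mul_ι (a b : L) (z : TensorAlgebra k L) :
    D a (z * ι k b) = D a z * ι k b + algebraMapInv z • ι k (a * b) := by
  induction z using word_induction with
  | word u =>
    cases u with
    | nil => simp [hD.map_one, hD.map_ι]
    | cons e t => simp [hD.map_ι_mul, mul_assoc]
  | add x y hx hy => simp only [add_mul, map_add, hx, hy, add_smul]; abel
  | smul e x hx => simp only [smul_mul_assoc, map_smul, hx, smul_add, smul_smul, smul_eq_mul]

end IsFirstLetterMerge

def IsWordReversal (R : TensorAlgebra k L →ₗ[k] TensorAlgebra k L) : Prop :=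
  ∀ w, R (word k w) = word k w.reverse

namespace IsWordReversal

variable {R : TensorAlgebra k L →ₗ[k] TensorAlgebra k L} (hR : IsWordReversal R)
include hR

lemma map_one : R 1 = 1 := hR []

lemma map_ι (c : L) : R (ι k c) = ι k c := by
  simpa using hR [c]

lemma map_map (z : TensorAlgebra k L) : R (R z) = z := by
  induction z using word_induction with
  | word u => rw [hR, hR, List.reverse_reverse]
  | add x y hx hy => simp only [map_add, hx, hy]
  | smul e x hx => simp only [map_smul, hx]

lemma map_mul (x y : TensorAlgebra k L) : R (x * y) = R y * R x := by
  induction x using word_induction with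
  | word u =>
    induction y using word_induction with
    | word v => rw [← word_append, hR, hR, hR, List.reverse_append, word_append]
    | add y z hy hz => simp only [mul_add, map_add, hy, hz, add_mul]
    | smul e y hy => simp only [mul_smul_comm, map_smul, hy, smul_mul_assoc]
  | add x z hx hz => simp only [add_mul, map_add, hx, hz, mul_add]
  | smul e x hx => simp only [smul_mul_assoc, map_smul, hx, mul_smul_comm]

lemma algebraMapInv_map (z : TensorAlgebra k L) : algebraMapInv (R z) = algebraMapInv z := by
  induction z using word_induction with
  | word u =>
    rw [hR]
    cases u with
    | nil => rfl
    | cons a t => simp [word_append]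
  | add x y hx hy => simp only [map_add, hx, hy]
  | smul e x hx => simp only [map_smul, hx]

end IsWordReversal

section MergeLast

variable (D : L → TensorAlgebra k L →ₗ[k] TensorAlgebra k L)
  (R : TensorAlgebra k L →ₗ[k] TensorAlgebra k L)

def mergeLast (a : L) : TensorAlgebra k L →ₗ[k] TensorAlgebra k L := R ∘ₗ D a ∘ₗ R

variable {D R} (hD : IsFirstLetterMerge D) (hR : IsWordReversal R)
include hD hR

lemma mergeLast_one (a : L) : mergeLast D R a 1 = 0 := by
  simp [mergeLast, hR.map_one, hD.map_one]

lemma mergeLast_ι_mul (a c : L) (z : TensorAlgebra k L) :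
    mergeLast D R a (ι k c * z) = ι k c * mergeLast D R a z + algebraMapInv z • ι k (a * c) := by
  simp only [mergeLast, LinearMap.comp_apply, hR.map_mul, hR.map_ι, hD.map_mul_ι, map_add,
    map_smul, hR.algebraMapInv_map]

lemma map_mergeLast_comm (a c : L) (z : TensorAlgebra k L) :
    D a (mergeLast D R c z) = mergeLast D R c (D a z) := by
  induction z using word_induction with
  | word u =>
    cases u with
    | nil => simp [mergeLast_one hD hR, hD.map_one]
    | cons e t =>
      simp only [word_cons, mergeLast_ι_mul hD hR, hD.map_ι_mul, map_add, map_smul, hD.map_ι,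
        mul_left_comm a c e]
  | add x y hx hy => simp only [map_add, hx, hy]
  | smul e x hx => simp only [map_smul, hx]

end MergeLast

def psiGeometric (s : k) : List L → TensorAlgebra k L := psi k fun n => s ^ (n - 1)

@[simp] lemma psiGeometric_nil (s : k) : psiGeometric s ([] : List L) = 1 := by
  rw [psiGeometric, psi]

section PsiGeometric

variable {D : L → TensorAlgebra k L →ₗ[k] TensorAlgebra k L} (hD : IsFirstLetterMerge D)
include hD

lemma psiGeometric_cons (s : k) (a : L) (u : List L) :
    psiGeometric s (a :: u) = ι k a * psiGeometric s u + s • D a (psiGeometric s u) := by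
  cases u with
  | nil => simp [psiGeometric, psi, blockProd, hD.map_one]
  | cons b t =>
    rw [psiGeometric, psi, Finset.sum_range_succ', add_comm]
    congr 1
    · simp [blockProd]
    · rw [psi, map_sum, Finset.smul_sum]
      refine Finset.sum_congr rfl fun j _ => ?_
      simp only [List.take_succ_cons, List.drop_succ_cons, map_smul, hD.map_ι_mul,
        Nat.add_sub_cancel, smul_smul, ← pow_succ', ← blockProd_cons (List.cons_ne_nil b _)]

variable {R : TensorAlgebra k L →ₗ[k] TensorAlgebra k L} (hR : IsWordReversal R)
include hR

lemma psiGeometric_append_singleton (s : k) (u : List L) (a : L) :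
    psiGeometric s (u ++ [a])
      = psiGeometric s u * ι k a + s • mergeLast D R a (psiGeometric s u) := by
  induction u with
  | nil => simp [psiGeometric_cons hD, hD.map_one, mergeLast_one hD hR]
  | cons e u ih =>
    simp only [List.cons_append, psiGeometric_cons hD, ih, map_add, map_smul, mul_add, add_mul,
      mul_smul_comm, smul_mul_assoc, hD.map_mul_ι, mergeLast_ι_mul hD hR,
      map_mergeLast_comm hD hR, smul_add, mul_assoc, mul_comm e a]
    abel

lemma IsWordReversal.map_psiGeometric (s : k) (u : List L) :
    R (psiGeometric s u) = psiGeometric s u.reverse := by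
  induction u with
  | nil => simp [hR.map_one]
  | cons a u ih =>
    rw [psiGeometric_cons hD, List.reverse_cons, psiGeometric_append_singleton hD hR, ← ih,
      map_add, map_smul, hR.map_mul, hR.map_ι, mergeLast, LinearMap.comp_apply,
      LinearMap.comp_apply, hR.map_map]

end PsiGeometric

structure IsQuasiShuffleProduct (s q : k) (D : L → TensorAlgebra k L →ₗ[k] TensorAlgebra k L)
    (mr : TensorAlgebra k L →ₗ[k] TensorAlgebra k L →ₗ[k] TensorAlgebra k L) : Prop where
  one_left : ∀ x, mr 1 x = x
  one_right : ∀ x, mr x 1 = x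
  cons_cons : ∀ (a b : L) (v w : List L),
    mr (word k (a :: v)) (word k (b :: w))
      = ι k a * mr (word k v) (word k (b :: w)) + ι k b * mr (word k (a :: v)) (word k w)
        + s • (ι k (a * b) * mr (word k v) (word k w)) + q • D (a * b) (mr (word k v) (word k w))

namespace IsQuasiShuffleProduct

variable {s q : k} {D : L → TensorAlgebra k L →ₗ[k] TensorAlgebra k L}
  {mr : TensorAlgebra k L →ₗ[k] TensorAlgebra k L →ₗ[k] TensorAlgebra k L}
  (hm : IsQuasiShuffleProduct s q D mr)
include hm

lemma comm_word (u v : List L) : mr (word k u) (word k v) = mr (word k v) (word k u) := by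
  induction u generalizing v with
  | nil => simp [hm.one_left, hm.one_right]
  | cons a u ihu =>
    induction v with
    | nil => simp [hm.one_left, hm.one_right]
    | cons b v ihv => rw [hm.cons_cons, hm.cons_cons, ihu, ihv, ihu, mul_comm b a]; abel

lemma comm (x y : TensorAlgebra k L) : mr x y = mr y x := by
  induction x using word_induction with
  | word u =>
    induction y using word_induction with
    | word v => exact hm.comm_word u v
    | add y z hy hz => simp only [map_add, LinearMap.add_apply, hy, hz]
    | smul e y hy => simp only [map_smul, LinearMap.smul_apply, hy]
  | add x z hx hz => simp only [map_add, LinearMap.add_apply, hx, hz]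
  | smul e x hx => simp only [map_smul, LinearMap.smul_apply, hx]

lemma ι_mul_cons (a b : L) (y : List L) (z : TensorAlgebra k L) :
    mr (ι k a * z) (word k (b :: y))
      = ι k a * mr z (word k (b :: y)) + ι k b * mr (ι k a * z) (word k y)
        + s • (ι k (a * b) * mr z (word k y)) + q • D (a * b) (mr z (word k y)) := by
  induction z using word_induction with
  | word u => rw [← word_cons]; exact hm.cons_cons a b u y
  | add x z hx hz =>
    simp only [mul_add, map_add, LinearMap.add_apply, smul_add, hx, hz]; abel
  | smul e x hx =>
    simp only [mul_smul_comm, map_smul, LinearMap.smul_apply, hx, smul_add, smul_comm e]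

variable (hD : IsFirstLetterMerge D)
include hD

lemma algebraMapInv_apply (x y : TensorAlgebra k L) :
    algebraMapInv (mr x y) = algebraMapInv x * algebraMapInv y := by
  induction x using word_induction with
  | word u =>
    induction y using word_induction with
    | word v =>
      cases u with
      | nil => simp [hm.one_left]
      | cons a u =>
        cases v with
        | nil => simp [hm.one_right]
        | cons b v => rw [hm.cons_cons]; simp [hD.algebraMapInv_map]
    | add y z hy hz => simp only [map_add, hy, hz, mul_add]
    | smul e y hy => simp only [map_smul, hy, smul_eq_mul, mul_left_comm]
  | add x z hx hz => simp only [map_add, LinearMap.add_apply, hx, hz, add_mul]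
  | smul e x hx => simp only [map_smul, LinearMap.smul_apply, hx, smul_eq_mul, mul_assoc]

lemma merge_cons (a b : L) (y : List L) (z : TensorAlgebra k L) :
    mr (D a z) (word k (b :: y))
      = D a (mr z (word k (b :: y))) - ι k (a * b) * mr z (word k y)
        + ι k b * mr (D a z) (word k y) := by
  induction z using word_induction with
  | word u =>
    cases u with
    | nil => simp [hD.map_one, hm.one_left, hD.map_ι_mul]
    | cons e t =>
      simp only [hD.map_word_cons, hm.cons_cons, map_add, map_smul, hD.map_ι_mul, hD.map_map,
        mul_assoc]
      abel
  | add x z hx hz =>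
    simp only [mul_add, map_add, LinearMap.add_apply, hx, hz]; abel
  | smul e x hx =>
    simp only [map_smul, LinearMap.smul_apply, hx, smul_add, smul_sub, mul_smul_comm]

lemma ι_mul_add_merge_cons (a b : L) (y : List L) (z : TensorAlgebra k L) :
    mr (ι k a * z + s • D a z) (word k (b :: y))
      = (ι k a * mr z (word k (b :: y)) + s • D a (mr z (word k (b :: y))))
        + ι k b * mr (ι k a * z + s • D a z) (word k y) + q • D (a * b) (mr z (word k y)) := by
  simp only [map_add, map_smul, LinearMap.add_apply, LinearMap.smul_apply, hm.ι_mul_cons,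
    hm.merge_cons hD, mul_add, mul_smul_comm, smul_add, smul_sub]
  abel

variable {R : TensorAlgebra k L →ₗ[k] TensorAlgebra k L} (hR : IsWordReversal R)
include hR

lemma singleton_snoc (a b : L) (w : List L) :
    mr (word k [a]) (word k (w ++ [b]))
      = mr (word k [a]) (word k w) * ι k b + word k (w ++ [b]) * ι k a
        + s • (word k w * ι k (a * b)) + q • mergeLast D R (a * b) (word k w) := by
  induction w with
  | nil =>
    rw [List.nil_append, hm.cons_cons]
    simp [hm.one_left, hm.one_right, hD.map_one, mergeLast_one hD hR]
  | cons c w ih =>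
    rw [List.cons_append, hm.cons_cons, hm.cons_cons, ih]
    simp only [hm.one_left, word_cons, word_append, word_nil, mul_one, hD.map_mul_ι,
      mergeLast_ι_mul hD hR, mul_add, add_mul, smul_add, mul_smul_comm, smul_mul_assoc,
      mul_assoc, mul_right_comm a c b]
    abel

lemma snoc_snoc (v w : List L) (a b : L) :
    mr (word k (v ++ [a])) (word k (w ++ [b]))
      = mr (word k (v ++ [a])) (word k w) * ι k b + mr (word k v) (word k (w ++ [b])) * ι k a
        + s • (mr (word k v) (word k w) * ι k (a * b))
        + q • mergeLast D R (a * b) (mr (word k v) (word k w)) := by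
  induction v generalizing w with
  | nil => simpa [hm.one_left] using hm.singleton_snoc hD hR a b w
  | cons p v ihv =>
    induction w with
    | nil =>
      rw [List.nil_append, hm.comm, hm.singleton_snoc hD hR b a, word_nil, hm.one_right,
        hm.one_right, hm.comm (word k [b]), mul_comm b a]
      abel
    | cons c w ihw =>
      have ihv' := ihv (c :: w)
      simp only [List.cons_append] at ihv' ihw ⊢
      rw [hm.cons_cons, ihv', ihw, ihv, hm.cons_cons p c (v ++ [a]), hm.cons_cons p c v,
        hm.cons_cons p c v]
      simp only [map_add, map_smul, hD.map_mul_ι, mergeLast_ι_mul hD hR, map_mergeLast_comm hD hR,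
        hm.algebraMapInv_apply hD, word_append, map_mul, algebraMapInv_word_cons, mul_zero,
        zero_mul, zero_smul, add_zero, mul_add, add_mul, smul_add, mul_smul_comm, smul_mul_assoc,
        mul_assoc, mul_comm (a * b) (p * c)]
      module

lemma reverse_word (u v : List L) :
    R (mr (word k u) (word k v)) = mr (word k u.reverse) (word k v.reverse) := by
  have hRD : ∀ (c : L) z, R (D c z) = mergeLast D R c (R z) := fun c z => by
    simp [mergeLast, hR.map_map]
  induction u generalizing v with
  | nil => rw [word_nil, hm.one_left, List.reverse_nil, word_nil, hm.one_left, hR]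
  | cons a u ihu =>
    induction v with
    | nil => rw [word_nil, hm.one_right, List.reverse_nil, word_nil, hm.one_right, hR]
    | cons b v ihv =>
      rw [hm.cons_cons, List.reverse_cons, List.reverse_cons, hm.snoc_snoc hD hR]
      simp only [map_add, map_smul, hR.map_mul, hR.map_ι, hRD, ihu, ihv, List.reverse_cons]
      abel

lemma reverse (x y : TensorAlgebra k L) : R (mr x y) = mr (R x) (R y) := by
  induction x using word_induction with
  | word u =>
    induction y using word_induction with
    | word v => rw [hm.reverse_word hD hR, hR, hR]
    | add y z hy hz => simp only [map_add, hy, hz]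
    | smul e y hy => simp only [map_smul, hy]
  | add x z hx hz => simp only [map_add, LinearMap.add_apply, hx, hz]
  | smul e x hx => simp only [map_smul, LinearMap.smul_apply, hx]

end IsQuasiShuffleProduct

section LeftAntipode

variable (s : k) (D : L → TensorAlgebra k L →ₗ[k] TensorAlgebra k L)
  (mr : TensorAlgebra k L →ₗ[k] TensorAlgebra k L →ₗ[k] TensorAlgebra k L) (w : List L)

def splitProd (i j : ℕ) : TensorAlgebra k L :=
  mr (psiGeometric s (w.take i).reverse) (word k (w.drop j))

def segProd (i l : ℕ) : L := blockProd ((w.drop i).take l)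

def mergedTerm (l i : ℕ) : TensorAlgebra k L :=
  if l = 0 then splitProd s mr w i i else D (segProd w i l) (splitProd s mr w i (i + l))

def headTerm (l i : ℕ) : TensorAlgebra k L := ι k (segProd w i l) * splitProd s mr w i (i + l)

def alternatingSum (l : ℕ) : TensorAlgebra k L :=
  ∑ i ∈ Finset.range (w.length - l + 1), (-1 : k) ^ i • mergedTerm s D mr w l i

lemma segProd_one {i : ℕ} (hi : i < w.length) : segProd w i 1 = w[i] := by
  rw [segProd, List.drop_eq_getElem_cons hi]
  rfl

lemma segProd_succ {i l : ℕ} (hl : l ≠ 0) (h : i + l < w.length) :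
    segProd w i (l + 1) = segProd w i l * w[i + l] := by
  have hlen : ((w.drop i).take l).length = l := by simp; omega
  rw [segProd, segProd, List.take_add_one, List.getElem?_drop, List.getElem?_eq_getElem h,
    Option.toList_some, blockProd_append_singleton (by rintro h; simp [h] at hlen; omega)]

lemma segProd_succ' {i l : ℕ} (hl : l ≠ 0) (h : i + l < w.length) :
    segProd w i (l + 1) = w[i] * segProd w (i + 1) l := by
  have hlen : ((w.drop (i + 1)).take l).length = l := by simp; omega
  rw [segProd, segProd, List.drop_eq_getElem_cons (by omega), List.take_succ_cons,
    blockProd_cons (by rintro h; simp [h] at hlen; omega)]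

variable {s q : k} {D mr} (hm : IsQuasiShuffleProduct s q D mr)
include hm

lemma splitProd_zero_left (j : ℕ) : splitProd s mr w 0 j = word k (w.drop j) := by
  simp [splitProd, hm.one_left]

lemma splitProd_of_length_le (i : ℕ) {j : ℕ} (hj : w.length ≤ j) :
    splitProd s mr w i j = psiGeometric s (w.take i).reverse := by
  simp [splitProd, List.drop_eq_nil_of_le hj, hm.one_right]

variable (hD : IsFirstLetterMerge D)
include hD
lemma splitProd_succ {i j : ℕ} (hi : i < w.length) (hj : j < w.length) :
    splitProd s mr w (i + 1) j
      = (ι k w[i] * splitProd s mr w i j + s • D w[i] (splitProd s mr w i j))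
        + ι k w[j] * splitProd s mr w (i + 1) (j + 1)
        + q • D (w[i] * w[j]) (splitProd s mr w i (j + 1)) := by
  rw [splitProd, splitProd, splitProd, splitProd, w.reverse_take_succ hi,
    List.drop_eq_getElem_cons hj, psiGeometric_cons hD, hm.ι_mul_add_merge_cons hD]

lemma mergedTerm_succ {l i : ℕ} (h : i + l + 2 ≤ w.length) :
    mergedTerm s D mr w l (i + 1)
      = headTerm s mr w (l + 1) i + headTerm s mr w (l + 1) (i + 1)
        + s • mergedTerm s D mr w (l + 1) i + q • mergedTerm s D mr w (l + 2) i := by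
  cases l with
  | zero =>
    have hseg : segProd w i 2 = w[i] * w[i + 1] := by
      rw [segProd_succ w one_ne_zero (by omega), segProd_one]
    rw [mergedTerm, if_pos rfl, splitProd_succ w hm hD (by omega) (by omega)]
    simp only [headTerm, mergedTerm, if_neg (Nat.succ_ne_zero _), hseg,
      segProd_one w (by omega : i < w.length), segProd_one w (by omega : i + 1 < w.length)]
    abel
  | succ l =>
    have hi : i < w.length := by omega
    have hj : i + 1 + (l + 1) < w.length := by omega
    have h1 : segProd w (i + 1) (l + 1) * w[i] = segProd w i (l + 1 + 1) := by
      rw [mul_comm]; exact (segProd_succ' w (l := l + 1) (by omega) (by omega)).symm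
    have h2 : segProd w (i + 1) (l + 1) * w[i + 1 + (l + 1)] = segProd w (i + 1) (l + 1 + 1) :=
      (segProd_succ w (l := l + 1) (by omega) hj).symm
    have h3 : segProd w (i + 1) (l + 1) * (w[i] * w[i + 1 + (l + 1)])
        = segProd w i (l + 1 + 2) := by
      have h := segProd_succ w (i := i) (l := l + 1 + 1) (by omega) (by omega)
      simp only [show i + (l + 1 + 1) = i + 1 + (l + 1) by omega] at h
      rw [← mul_assoc, h1, h]
    rw [mergedTerm, if_neg (Nat.succ_ne_zero _), splitProd_succ w hm hD hi hj]
    simp only [map_add, map_smul, hD.map_ι_mul, hD.map_map, h1, h2, h3]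
    simp only [headTerm, mergedTerm, if_neg (Nat.succ_ne_zero _)]
    rw [show i + (l + 1 + 1) = i + 1 + (l + 1) by omega,
      show i + 1 + (l + 1 + 1) = i + 1 + (l + 1) + 1 by omega,
      show i + (l + 1 + 2) = i + 1 + (l + 1) + 1 by omega]
    abel

lemma mergedTerm_zero {l : ℕ} (hl : l < w.length) :
    mergedTerm s D mr w l 0 = headTerm s mr w (l + 1) 0 := by
  have hword : splitProd s mr w 0 l = ι k w[l] * splitProd s mr w 0 (l + 1) := by
    rw [splitProd_zero_left w hm, splitProd_zero_left w hm, List.drop_eq_getElem_cons hl,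
      word_cons]
  cases l with
  | zero => rw [mergedTerm, if_pos rfl, hword, headTerm, segProd_one w hl]
  | succ l =>
    rw [mergedTerm, if_neg (Nat.succ_ne_zero _), headTerm, zero_add, zero_add, hword,
      hD.map_ι_mul, segProd_succ w (Nat.succ_ne_zero _) (by omega)]
    simp only [zero_add]

lemma mergedTerm_last {l m : ℕ} (h : w.length = l + m + 1) :
    mergedTerm s D mr w l (m + 1)
      = headTerm s mr w (l + 1) m + s • mergedTerm s D mr w (l + 1) m := by
  have hmw : m < w.length := by omega
  have hpsi : splitProd s mr w (m + 1) (m + 1 + l)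
      = ι k w[m] * splitProd s mr w m (m + (l + 1))
        + s • D w[m] (splitProd s mr w m (m + (l + 1))) := by
    rw [splitProd_of_length_le w hm _ (by omega), splitProd_of_length_le w hm _ (by omega),
      w.reverse_take_succ hmw, psiGeometric_cons hD]
  cases l with
  | zero =>
    rw [add_zero] at hpsi
    rw [mergedTerm, if_pos rfl, hpsi, headTerm, mergedTerm, if_neg (Nat.succ_ne_zero _), zero_add,
      segProd_one w hmw]
  | succ l =>
    rw [mergedTerm, if_neg (Nat.succ_ne_zero _), hpsi, headTerm, mergedTerm,
      if_neg (Nat.succ_ne_zero _), map_add, map_smul, hD.map_ι_mul, hD.map_map, mul_comm,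
      ← segProd_succ' w (Nat.succ_ne_zero _) (by omega)]

lemma mergedTerm_zero_of_length_le {l : ℕ} (hl0 : l ≠ 0) (hl : w.length ≤ l) :
    mergedTerm s D mr w l 0 = 0 := by
  rw [mergedTerm, if_neg hl0, zero_add, splitProd_zero_left w hm, List.drop_eq_nil_of_le hl,
    word_nil, hD.map_one]

lemma alternatingSum_linear_recurrence {l : ℕ} (h : l + 2 ≤ w.length) :
    alternatingSum s D mr w l + s • alternatingSum s D mr w (l + 1)
      + q • alternatingSum s D mr w (l + 2) = 0 := by
  obtain ⟨m, hlen⟩ : ∃ m, w.length = l + m + 2 := ⟨w.length - l - 2, by omega⟩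
  set Q := headTerm s mr w (l + 1)
  set K₁ := mergedTerm s D mr w (l + 1)
  set K₂ := mergedTerm s D mr w (l + 2)
  have hstep : ∀ i ∈ Finset.range (m + 1),
      (-1 : k) ^ (i + 1) • mergedTerm s D mr w l (i + 1)
        = -((-1 : k) ^ i • Q i - (-1 : k) ^ (i + 1) • Q (i + 1))
          - s • ((-1 : k) ^ i • K₁ i) - q • ((-1 : k) ^ i • K₂ i) := by
    intro i hi
    rw [Finset.mem_range] at hi
    rw [mergedTerm_succ w hm hD (by omega)]
    module
  have hA : alternatingSum s D mr w l = Q 0 + ∑ i ∈ Finset.range (m + 1),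
      (-1 : k) ^ (i + 1) • mergedTerm s D mr w l (i + 1)
        + (-1 : k) ^ (m + 2) • mergedTerm s D mr w l (m + 2) := by
    rw [alternatingSum, show w.length - l + 1 = m + 2 + 1 by omega, Finset.sum_range_succ',
      Finset.sum_range_succ, mergedTerm_zero w hm hD (by omega), pow_zero, one_smul]
    abel
  have hA₁ : alternatingSum s D mr w (l + 1)
      = ∑ i ∈ Finset.range (m + 1), (-1 : k) ^ i • K₁ i + (-1 : k) ^ (m + 1) • K₁ (m + 1) := by
    rw [alternatingSum, show w.length - (l + 1) + 1 = m + 1 + 1 by omega, Finset.sum_range_succ]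
  have hA₂ : alternatingSum s D mr w (l + 2)
      = ∑ i ∈ Finset.range (m + 1), (-1 : k) ^ i • K₂ i := by
    rw [alternatingSum, show w.length - (l + 2) + 1 = m + 1 by omega]
  rw [hA, hA₁, hA₂, Finset.sum_congr rfl hstep,
    mergedTerm_last w hm hD (by omega : w.length = l + (m + 1) + 1)]
  simp only [Finset.sum_sub_distrib, Finset.sum_neg_distrib, ← Finset.smul_sum,
    Finset.sum_range_sub' (fun i => (-1 : k) ^ i • Q i)]
  module

lemma alternatingSum_eq_zero (hw : w ≠ []) {l : ℕ} (hl : l ≤ w.length) :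
    alternatingSum s D mr w l = 0 := by
  have hn : w.length ≠ 0 := by simpa using hw
  obtain ⟨m, hlm⟩ : ∃ m, w.length = l + m := ⟨w.length - l, by omega⟩
  induction m using Nat.twoStepInduction generalizing l with
  | zero =>
    rw [alternatingSum, show w.length - l + 1 = 1 by omega, Finset.sum_range_one,
      mergedTerm_zero_of_length_le w hm hD (by omega) (by omega), smul_zero]
  | one =>
    rw [alternatingSum, show w.length - l + 1 = 2 by omega, Finset.sum_range_succ,
      Finset.sum_range_one, mergedTerm_zero w hm hD (by omega),
      mergedTerm_last w hm hD (l := l) (m := 0) (by omega),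
      mergedTerm_zero_of_length_le w hm hD (by omega) (by omega)]
    module
  | more m ih₀ ih₁ =>
    have h := alternatingSum_linear_recurrence w hm hD (l := l) (by omega)
    rwa [ih₁ (l := l + 1) (by omega) (by omega), ih₀ (l := l + 2) (by omega) (by omega),
      smul_zero, smul_zero, add_zero, add_zero] at h

lemma sum_mul_psiGeometric_reverse_take (hw : w ≠ []) :
    ∑ i ∈ Finset.range (w.length + 1),
      (-1 : k) ^ i • mr (psiGeometric s (w.take i).reverse) (word k (w.drop i)) = 0 := by
  simpa [alternatingSum, mergedTerm, splitProd] using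
    alternatingSum_eq_zero w hm hD hw (Nat.zero_le _)

end LeftAntipode

def antipodeWord (s : k) (u : List L) : TensorAlgebra k L :=
  (-1 : k) ^ u.length • psiGeometric s u.reverse

lemma IsWordReversal.map_antipodeWord {D : L → TensorAlgebra k L →ₗ[k] TensorAlgebra k L}
    {R : TensorAlgebra k L →ₗ[k] TensorAlgebra k L} (hD : IsFirstLetterMerge D)
    (hR : IsWordReversal R) (s : k) (u : List L) :
    R (antipodeWord s u) = antipodeWord s u.reverse := by
  rw [antipodeWord, antipodeWord, map_smul, hR.map_psiGeometric hD, List.length_reverse]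

section Antipode

variable {s q : k} {D : L → TensorAlgebra k L →ₗ[k] TensorAlgebra k L}
  {mr : TensorAlgebra k L →ₗ[k] TensorAlgebra k L →ₗ[k] TensorAlgebra k L}
  {R : TensorAlgebra k L →ₗ[k] TensorAlgebra k L}
  (hm : IsQuasiShuffleProduct s q D mr) (hD : IsFirstLetterMerge D) (hR : IsWordReversal R)
include hm hD

lemma sum_antipodeWord_mul (w : List L) :
    ∑ i ∈ Finset.range (w.length + 1), mr (antipodeWord s (w.take i)) (word k (w.drop i))
      = if w.length = 0 then 1 else 0 := by
  rcases eq_or_ne w [] with rfl | hw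
  · simp [antipodeWord, hm.one_left]
  rw [if_neg (by simpa using hw), ← sum_mul_psiGeometric_reverse_take w hm hD hw]
  refine Finset.sum_congr rfl fun i hi => ?_
  rw [antipodeWord, List.length_take_of_le (by simpa [Nat.lt_succ_iff] using hi), map_smul,
    LinearMap.smul_apply]

include hR

lemma sum_mul_antipodeWord (w : List L) :
    ∑ i ∈ Finset.range (w.length + 1), mr (word k (w.take i)) (antipodeWord s (w.drop i))
      = if w.length = 0 then 1 else 0 := by
  have h := congrArg R (sum_antipodeWord_mul hm hD w.reverse)
  rw [map_sum, List.length_reverse] at h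
  have hif : R (if w.length = 0 then 1 else 0) = if w.length = 0 then 1 else 0 := by
    split_ifs <;> simp [hR.map_one]
  rw [hif, ← Finset.sum_range_reflect] at h
  rw [← h]
  refine Finset.sum_congr rfl fun i hi => ?_
  rw [Finset.mem_range] at hi
  rw [hm.reverse hD hR, hR.map_antipodeWord hD, hR, List.take_reverse, List.drop_reverse,
    List.reverse_reverse, List.reverse_reverse, hm.comm,
    show w.length - (w.length + 1 - 1 - i) = i by omega]

end Antipode

end

/--
The antipode of the Hopf algebra `(k⟨A⟩, ∗_r, Δ)` is
`S = Σ^{1−2r} ∘ T ∘ R`, where `T(w) = (−1)^{ℓ(w)} w` and `R` reverses words: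
that is, `S` satisfies the (two-sided) antipode identity
`Σ S(w₍₁₎) ∗_r w₍₂₎ = Σ w₍₁₎ ∗_r S(w₍₂₎) = ε(w)1` for the deconcatenation
coproduct.  (For `r = 1/2`, `Σ^{1−2r} = Σ^0 = id` and the antipode is `T∘R`.)
-/
theorem stmt11 (r : k)
    (D : L → TensorAlgebra k L →ₗ[k] TensorAlgebra k L)
    (hD1 : ∀ a : L, D a 1 = 0)
    (hDw : ∀ (a c : L) (u : List L),
      D a (TensorAlgebra.ι k c * word k u) = TensorAlgebra.ι k (a * c) * word k u)
    (mr : TensorAlgebra k L →ₗ[k] TensorAlgebra k L →ₗ[k] TensorAlgebra k L)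
    (hmrl : ∀ x, mr 1 x = x) (hmrr : ∀ x, mr x 1 = x)
    (hmrrec : ∀ (a b : L) (v w : List L),
      mr (word k (a :: v)) (word k (b :: w))
        = TensorAlgebra.ι k a * mr (word k v) (word k (b :: w))
          + TensorAlgebra.ι k b * mr (word k (a :: v)) (word k w)
          + (1 - 2 * r) • (TensorAlgebra.ι k (a * b) * mr (word k v) (word k w))
          + (r ^ 2 - r) • D (a * b) (mr (word k v) (word k w)))
    (S12r T R : TensorAlgebra k L →ₗ[k] TensorAlgebra k L)
    (hS12r : ∀ w : List L, S12r (word k w) = psi k (fun n => (1 - 2 * r) ^ (n - 1)) w)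
    (hT : ∀ w : List L, T (word k w) = ((-1 : k) ^ w.length) • word k w)
    (hR : ∀ w : List L, R (word k w) = word k w.reverse)
    (S : TensorAlgebra k L →ₗ[k] TensorAlgebra k L)
    (hS : ∀ x, S x = S12r (T (R x))) :
    ∀ w : List L,
      (∑ i ∈ Finset.range (w.length + 1),
          mr (S (word k (w.take i))) (word k (w.drop i))
        = if w.length = 0 then 1 else 0) ∧
      (∑ i ∈ Finset.range (w.length + 1),
          mr (word k (w.take i)) (S (word k (w.drop i)))
        = if w.length = 0 then 1 else 0) := by
  have hD : IsFirstLetterMerge D := ⟨hD1, hDw⟩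
  have hm : IsQuasiShuffleProduct (1 - 2 * r) (r ^ 2 - r) D mr := ⟨hmrl, hmrr, hmrrec⟩
  have hSw : ∀ u, S (word k u) = antipodeWord (1 - 2 * r) u := fun u => by
    rw [hS, hR, hT, map_smul, hS12r, List.length_reverse]
    rfl
  intro w
  simp only [hSw]
  exact ⟨sum_antipodeWord_mul hm hD w, sum_mul_antipodeWord hm hD hR w⟩
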